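/- Let n ≥ 1, let F ∈ ℝ[x_1,…,x_n] be a symmetric polynomial of total degree d with 2 ≤ d ≤ n, set k := ⌊d/2⌋, and let G ∈ ℝ[z_1,…,z_n] be the unique polynomial with F = G(e_1,…,e_n), where e_i is the i-th elementary symmetric polynomial. Then G involves only the variables z_1,…,z_d, and there exist polynomials G_0 ∈ ℝ[z_1,…,z_k] and G_i ∈ ℝ[z_1,…,z_{d−i}] for i = k+1,…,d such that G = G_0 + Σ_{i=k+1}^{d} G_i · z_i; in particular every variable z_i with i > k appears at most linearly in G and no monomial of G contains two distinct variables z_i, z_j with i, j > k. -/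

import Mathlib

/-!
Give the variable `z_i` the weight `i`. Since `e_i` is homogeneous of degree `i`, substituting
`e_i` for `z_i` sends the weight-`m` part of `G` to the degree-`m` part of `F`; as this
substitution is injective, every monomial of `G` has weight at most `d`. Such a monomial contains
at most one variable `z_i` of weight `i > d/2`, so `G_i := G / z_i` (the monomials divisible by
`z_i`, divided by it) and `G_0 := G - ∑_{i > k} G_i z_i` work: `G_0` keeps exactly the monomials
of `G` free of the heavy variables, and a monomial `z_i z_j ⋯` of `G` has `i + j ≤ d`.
-/

open MvPolynomial Finset

namespace Finsupp

variable {σ : Type*}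

theorem add_le_weight {w : σ → ℕ} {f : σ →₀ ℕ} {i j : σ} (hij : i ≠ j) (hi : f i ≠ 0)
    (hj : f j ≠ 0) : w i + w j ≤ weight w f := by
  rw [← weight_sub_single_add hi, add_comm]
  gcongr
  exact le_weight_of_ne_zero' w (by simpa [single_eq_of_ne' hij] using hj)

theorem card_inter_support_le_one_of_weight_le [DecidableEq σ] {w : σ → ℕ} {d : ℕ} {S : Finset σ}
    (hS : ∀ i ∈ S, d < 2 * w i) {f : σ →₀ ℕ} (hf : weight w f ≤ d) :
    #(S ∩ f.support) ≤ 1 := by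
  refine card_le_one.2 fun i hi j hj => by_contra fun hij => ?_
  rw [mem_inter, mem_support_iff] at hi hj
  have := add_le_weight (w := w) hij hi.2 hj.2
  have := hS i hi.1
  have := hS j hj.1
  omega

end Finsupp

namespace MvPolynomial

variable {σ τ R S : Type*}

variable (σ R) in
theorem isHomogeneous_esymm [CommSemiring R] [Fintype σ] (n : ℕ) :
    (esymm σ R n).IsHomogeneous n := by
  refine IsHomogeneous.sum _ _ n fun t ht => ?_
  simpa [mem_powersetCard_univ.mp ht] using
    IsHomogeneous.prod t (fun i => (X i : MvPolynomial σ R)) (fun _ => 1)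
      fun i _ => isHomogeneous_X R i

theorem IsWeightedHomogeneous.isHomogeneous_aeval [CommSemiring R] [CommSemiring S] [Algebra R S]
    {w : σ → ℕ} {m : ℕ} {φ : MvPolynomial σ R} (hφ : φ.IsWeightedHomogeneous w m)
    {g : σ → MvPolynomial τ S} (hg : ∀ i, (g i).IsHomogeneous (w i)) :
    (aeval g φ).IsHomogeneous m := by
  rw [φ.as_sum, map_sum]
  refine IsHomogeneous.sum _ _ m fun t ht => ?_
  rw [aeval_monomial, ← hφ (mem_support_iff.mp ht), ← zero_add (Finsupp.weight w t),
    algebraMap_apply]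
  refine (isHomogeneous_C _ _).mul ?_
  simpa only [Finsupp.weight_apply, Finsupp.prod, Finsupp.sum, smul_eq_mul, mul_comm] using
    IsHomogeneous.prod t.support (fun i => g i ^ t i) (fun i => w i * t i)
      fun i _ => (hg i).pow (t i)

theorem homogeneousComponent_aeval [CommSemiring R] [CommSemiring S] [Algebra R S]
    {w : σ → ℕ} {g : σ → MvPolynomial τ S} (hg : ∀ i, (g i).IsHomogeneous (w i)) (m : ℕ)
    (p : MvPolynomial σ R) :
    homogeneousComponent m (aeval g p) = aeval g (weightedHomogeneousComponent w m p) := by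
  classical
  induction p using MvPolynomial.induction_on' with
  | add p q hp hq => simp only [map_add, hp, hq]
  | monomial t c =>
    have hmon := isWeightedHomogeneous_monomial w t c rfl
    rw [homogeneousComponent_of_mem (hmon.isHomogeneous_aeval hg),
      weightedHomogeneousComponent_of_mem hmon]
    split_ifs <;> simp

theorem weight_le_totalDegree_aeval_esymm [Fintype σ] [CommRing R] {n : ℕ}
    (hn : n ≤ Fintype.card σ) {p : MvPolynomial (Fin n) R} {t : Fin n →₀ ℕ}
    (ht : t ∈ p.support) :
    Finsupp.weight (fun i : Fin n => (i : ℕ) + 1) t ≤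
      (aeval (fun i : Fin n => esymm σ R ((i : ℕ) + 1)) p).totalDegree := by
  classical
  by_contra! hlt
  have hcomp : weightedHomogeneousComponent (fun i : Fin n => (i : ℕ) + 1)
      (Finsupp.weight (fun i : Fin n => (i : ℕ) + 1) t) p = 0 := by
    refine esymmAlgHom_injective R hn (Subtype.ext ?_)
    rw [esymmAlgHom_apply, map_zero, ZeroMemClass.coe_zero,
      ← homogeneousComponent_aeval (fun i => isHomogeneous_esymm σ R _),
      homogeneousComponent_eq_zero _ _ hlt]
  have hcoeff := coeff_weightedHomogeneousComponent (w := fun i : Fin n => (i : ℕ) + 1)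
    (Finsupp.weight (fun i : Fin n => (i : ℕ) + 1) t) p t
  rw [hcomp, if_pos rfl, coeff_zero] at hcoeff
  exact mem_support_iff.mp ht hcoeff.symm

theorem coeff_sub_sum_divMonomial_mul_X [CommRing R] [DecidableEq σ] (S : Finset σ)
    (p : MvPolynomial σ R) (u : σ →₀ ℕ) :
    coeff u (p - ∑ i ∈ S, p.divMonomial (Finsupp.single i 1) * X i) =
      (1 - #(S ∩ u.support)) * coeff u p := by
  have hterm : ∀ i ∈ S, coeff u (p.divMonomial (Finsupp.single i 1) * X i) =
      if i ∈ u.support then coeff u p else 0 := by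
    intro i _
    rw [coeff_mul_X', coeff_divMonomial]
    split_ifs with hi
    · rw [add_tsub_cancel_of_le (Finsupp.single_le_iff.2 (Nat.one_le_iff_ne_zero.2
        (Finsupp.mem_support_iff.1 hi)))]
    · rfl
  rw [coeff_sub, coeff_sum, sum_congr rfl hterm, sum_ite_mem, sum_const, nsmul_eq_mul, sub_mul,
    one_mul]

theorem support_sub_sum_divMonomial_mul_X [CommRing R] [DecidableEq σ] {S : Finset σ}
    {p : MvPolynomial σ R} (hp : ∀ t ∈ p.support, #(S ∩ t.support) ≤ 1) {u : σ →₀ ℕ}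
    (hu : u ∈ (p - ∑ i ∈ S, p.divMonomial (Finsupp.single i 1) * X i).support) :
    u ∈ p.support ∧ Disjoint S u.support := by
  rw [mem_support_iff, coeff_sub_sum_divMonomial_mul_X] at hu
  have hpu : u ∈ p.support := mem_support_iff.2 (right_ne_zero_of_mul hu)
  refine ⟨hpu, disjoint_iff_inter_eq_empty.2 (not_nonempty_iff_eq_empty.1 fun hne => hu ?_)⟩
  rw [le_antisymm (hp u hpu) (card_pos.2 hne)]
  simp

theorem le_of_mem_vars_of_weight_le [CommSemiring R] {w : σ → ℕ} {d : ℕ} {p : MvPolynomial σ R}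
    (hp : ∀ t ∈ p.support, Finsupp.weight w t ≤ d) {j : σ} (hj : j ∈ p.vars) : w j ≤ d := by
  obtain ⟨t, ht, hjt⟩ := (mem_vars_iff_mem_support j).1 hj
  exact (Finsupp.le_weight_of_ne_zero' w (Finsupp.mem_support_iff.1 hjt)).trans (hp t ht)

theorem add_le_of_mem_vars_divMonomial [CommSemiring R] {w : σ → ℕ} {d : ℕ}
    {p : MvPolynomial σ R} (hp : ∀ t ∈ p.support, Finsupp.weight w t ≤ d) {i j : σ}
    (hj : j ∈ (p.divMonomial (Finsupp.single i 1)).vars) : w i + w j ≤ d := by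
  obtain ⟨u, hu, hju⟩ := (mem_vars_iff_mem_support j).1 hj
  have hiu := hp _ (by simpa only [mem_support_iff, coeff_divMonomial] using hu)
  rw [map_add, Finsupp.weight_single, one_smul] at hiu
  have := Finsupp.le_weight_of_ne_zero' w (Finsupp.mem_support_iff.1 hju)
  omega

end MvPolynomial

theorem symm_poly_representation_structure_general (n d : ℕ)
    (F : MvPolynomial (Fin n) ℝ)
    (hdeg : F.totalDegree = d) (k : ℕ) (hk : k = d / 2)
    (G : MvPolynomial (Fin n) ℝ)
    (hG : F = MvPolynomial.aeval
      (fun i : Fin n => MvPolynomial.esymm (Fin n) ℝ ((i : ℕ) + 1)) G) :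
    (∀ j ∈ G.vars, (j : ℕ) + 1 ≤ d) ∧
    ∃ (G0 : MvPolynomial (Fin n) ℝ) (Gi : Fin n → MvPolynomial (Fin n) ℝ),
      (∀ j ∈ G0.vars, (j : ℕ) + 1 ≤ k) ∧
      (∀ i : Fin n, k + 1 ≤ (i : ℕ) + 1 → (i : ℕ) + 1 ≤ d →
        ∀ j ∈ (Gi i).vars, (j : ℕ) + 1 ≤ d - ((i : ℕ) + 1)) ∧
      G = G0 + ∑ i ∈ Finset.univ.filter
          (fun i : Fin n => k + 1 ≤ (i : ℕ) + 1 ∧ (i : ℕ) + 1 ≤ d),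
          Gi i * MvPolynomial.X i := by
  classical
  set S := Finset.univ.filter (fun i : Fin n => k + 1 ≤ (i : ℕ) + 1 ∧ (i : ℕ) + 1 ≤ d)
  have hweight : ∀ t ∈ G.support, Finsupp.weight (fun i : Fin n => (i : ℕ) + 1) t ≤ d :=
    fun t ht => hdeg ▸ hG ▸ weight_le_totalDegree_aeval_esymm (Fintype.card_fin n).ge ht
  have hvars : ∀ j ∈ G.vars, (j : ℕ) + 1 ≤ d := fun j => le_of_mem_vars_of_weight_le hweight
  have hS : ∀ i ∈ S, d < 2 * ((i : ℕ) + 1) := by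
    intro i hi
    simp only [S, mem_filter, mem_univ, true_and] at hi
    omega
  refine ⟨hvars, G - ∑ i ∈ S, G.divMonomial (Finsupp.single i 1) * X i,
    fun i => G.divMonomial (Finsupp.single i 1), ?_, fun i _ _ j hj => ?_,
    (sub_add_cancel _ _).symm⟩
  · intro j hj
    obtain ⟨u, hu, hju⟩ := (mem_vars_iff_mem_support j).1 hj
    obtain ⟨huG, hdisj⟩ := support_sub_sum_divMonomial_mul_X
      (fun t ht => Finsupp.card_inter_support_le_one_of_weight_le hS (hweight t ht)) hu
    have hjd := hvars j ((mem_vars_iff_mem_support j).2 ⟨u, huG, hju⟩)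
    have hjS : j ∉ S := disjoint_right.1 hdisj hju
    simp only [S, mem_filter, mem_univ, true_and] at hjS
    omega
  · have := add_le_of_mem_vars_divMonomial hweight hj
    omega

/-- Structure of the representation of a symmetric polynomial of degree `d` in terms of the
elementary symmetric polynomials: writing `F = G(e_1, …, e_n)` (variables `z_1, …, z_n` are
indexed here by `Fin n`, the variable `z_{i+1}` corresponding to the index `i : Fin n`),
the polynomial `G` involves only `z_1, …, z_d`, and it decomposes as
`G = G_0 + ∑_{i=k+1}^{d} G_i z_i` where `G_0 ∈ ℝ[z_1, …, z_k]` and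
`G_i ∈ ℝ[z_1, …, z_{d-i}]`, with `k = ⌊d/2⌋`. -/
theorem symm_poly_representation_structure (n d : ℕ) (hn : 1 ≤ n) (hd2 : 2 ≤ d) (hdn : d ≤ n)
    (F : MvPolynomial (Fin n) ℝ) (hF : MvPolynomial.IsSymmetric F)
    (hdeg : F.totalDegree = d) (k : ℕ) (hk : k = d / 2)
    (G : MvPolynomial (Fin n) ℝ)
    (hG : F = MvPolynomial.aeval
      (fun i : Fin n => MvPolynomial.esymm (Fin n) ℝ ((i : ℕ) + 1)) G) :
    (∀ j ∈ G.vars, (j : ℕ) + 1 ≤ d) ∧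
    ∃ (G0 : MvPolynomial (Fin n) ℝ) (Gi : Fin n → MvPolynomial (Fin n) ℝ),
      (∀ j ∈ G0.vars, (j : ℕ) + 1 ≤ k) ∧
      (∀ i : Fin n, k + 1 ≤ (i : ℕ) + 1 → (i : ℕ) + 1 ≤ d →
        ∀ j ∈ (Gi i).vars, (j : ℕ) + 1 ≤ d - ((i : ℕ) + 1)) ∧
      G = G0 + ∑ i ∈ Finset.univ.filter
          (fun i : Fin n => k + 1 ≤ (i : ℕ) + 1 ∧ (i : ℕ) + 1 ≤ d),
          Gi i * MvPolynomial.X i :=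
  symm_poly_representation_structure_general n d F hdeg k hk G hG
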